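/- arXiv:1604.01110 — 3 statements merged into one kernel-verified Lean document; each statement's English description precedes it below -/
import Mathlib

section
/- Let F(x) be analytic in a neighborhood of 1, let l be a positive integer, and for 0 ≤ r ≤ l let a_i^{l,r} denote the Taylor coefficients of x^l F(x)^{l-r} at x = 1. Then for any nonzero complex x with |x| sufficiently large compared to ε, ∑_{r=0}^{l} ∑_{i=0}^{r-1} C(l,r) a_i^{l,r} x^{i-r} = (1/(2πi)) ∮_{|y|=ε} (1/(x-y)) · ( 1 + 1/y + (1+y)F(1+y) )^l dy, where ε ≪ min(1,|x|) and the contour is counterclockwise. -/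
open scoped BigOperators Real

lemma circleIntegral_finset_sum {ι : Type*} (s : Finset ι) (f : ι → ℂ → ℂ) (c : ℂ) (R : ℝ)
    (h : ∀ i ∈ s, CircleIntegrable (f i) c R) :
    (∮ z in C(c, R), ∑ i ∈ s, f i z) = ∑ i ∈ s, ∮ z in C(c, R), f i z := by
  simp only [circleIntegral, Finset.smul_sum]
  rw [intervalIntegral.integral_finset_sum]
  exact fun i hi => (h i hi).out

lemma circleIntegral_add' {f g : ℂ → ℂ} {c : ℂ} {R : ℝ}
    (hf : CircleIntegrable f c R) (hg : CircleIntegrable g c R) :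
    (∮ z in C(c, R), (f z + g z)) = (∮ z in C(c, R), f z) + ∮ z in C(c, R), g z := by
  simp only [circleIntegral, smul_add]
  exact intervalIntegral.integral_add hf.out hg.out


lemma circleIntegrable_sum {ι : Type*} (s : Finset ι) (f : ι → ℂ → ℂ) {c : ℂ} {R : ℝ}
    (h : ∀ i ∈ s, CircleIntegrable (f i) c R) :
    CircleIntegrable (fun z => ∑ i ∈ s, f i z) c R := by
  have := IntervalIntegrable.sum (μ := MeasureTheory.volume) (a := 0) (b := 2 * π) s
    (f := fun i (θ : ℝ) => f i (circleMap c R θ)) fun i hi => h i hi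
  show IntervalIntegrable (fun θ : ℝ => ∑ i ∈ s, f i (circleMap c R θ)) MeasureTheory.volume 0 (2 * π)
  have h2 : (fun θ : ℝ => ∑ i ∈ s, f i (circleMap c R θ)) = ∑ i ∈ s, (fun θ : ℝ => f i (circleMap c R θ)) := by
    ext θ
    simp
  rw [h2]
  exact this

lemma CircleIntegrable.const_mul'' {f : ℂ → ℂ} {c : ℂ} {R : ℝ}
    (hf : CircleIntegrable f c R) (a : ℂ) : CircleIntegrable (fun z => a * f z) c R :=
  IntervalIntegrable.const_mul hf a

lemma keyK (x y : ℂ) (hx : x ≠ 0) (hy : y ≠ 0) (hxy : x - y ≠ 0) (r : ℕ) :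
    (x - y)⁻¹ * (y⁻¹) ^ r
      = ∑ i ∈ Finset.range r, x ^ ((i : ℤ) - (r : ℤ)) * (y⁻¹) ^ (i + 1)
        + (x ^ (r : ℤ))⁻¹ * (x - y)⁻¹ := by
  induction r with
  | zero => simp
  | succ r ih =>
    have hpf : y⁻¹ * (x - y)⁻¹ = x⁻¹ * y⁻¹ + x⁻¹ * (x - y)⁻¹ := by
      field_simp
      ring
    have step : (x - y)⁻¹ * (y⁻¹) ^ (r + 1) = y⁻¹ * ((x - y)⁻¹ * (y⁻¹) ^ r) := by ring
    rw [step, ih, mul_add, Finset.mul_sum, Finset.sum_range_succ']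
    have h0 : ((0 : ℕ) : ℤ) - ((r + 1 : ℕ) : ℤ) = -(r + 1 : ℤ) := by push_cast; ring
    have hterm : ∀ i ∈ Finset.range r,
        y⁻¹ * (x ^ ((i : ℤ) - (r : ℤ)) * (y⁻¹) ^ (i + 1))
          = x ^ (((i + 1 : ℕ) : ℤ) - ((r + 1 : ℕ) : ℤ)) * (y⁻¹) ^ (i + 1 + 1) := by
      intro i _
      have : ((i + 1 : ℕ) : ℤ) - ((r + 1 : ℕ) : ℤ) = (i : ℤ) - (r : ℤ) := by push_cast; ring
      rw [this]; ring
    rw [Finset.sum_congr rfl hterm]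
    have hlast : y⁻¹ * ((x ^ (r : ℤ))⁻¹ * (x - y)⁻¹)
        = x ^ (((0 : ℕ) : ℤ) - ((r + 1 : ℕ) : ℤ)) * (y⁻¹) ^ (0 + 1)
          + (x ^ ((r + 1 : ℕ) : ℤ))⁻¹ * (x - y)⁻¹ := by
      rw [h0]
      rw [zpow_neg, show ((r:ℤ)+1) = ((r+1:ℕ):ℤ) by push_cast; ring]
      rw [show (x ^ ((r+1:ℕ):ℤ)) = x ^ (r+1) by rw [zpow_natCast],
          show x ^ (r : ℤ) = x ^ r by rw [zpow_natCast]]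
      field_simp
      have h1 : y * (1 / y) = 1 := mul_one_div_cancel hy
      linear_combination (-(x ^ r * (x - y))) * h1
    rw [hlast]
    ring

/-- Lemma 5.6 (`a_i^{l,r}` identity): with `a_i^{l,r}` the Taylor coefficients of
`x^l F(x)^{l-r}` at `1`,
`∑_{r=0}^{l} ∑_{i=0}^{r-1} C(l,r) a_i^{l,r} x^{i-r}
  = (1/2πi) ∮_{|y|=ε} (x-y)⁻¹ (1 + 1/y + (1+y)F(1+y))^l dy`. -/
theorem taylor_coeff_contour_identity (l : ℕ) (hl : 1 ≤ l) (F : ℂ → ℂ)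
    (ε δ : ℝ) (hε : 0 < ε) (hε1 : ε < 1) (hεδ : 2 * ε < δ)
    (hF : AnalyticOnNhd ℂ F (Metric.ball (1 : ℂ) δ))
    (x : ℂ) (hx : ε < ‖x‖) :
    ∑ r ∈ Finset.range (l + 1), ∑ i ∈ Finset.range r,
        (l.choose r : ℂ) *
          (iteratedDeriv i (fun u : ℂ => u ^ l * F u ^ (l - r)) 1 / (Nat.factorial i : ℂ)) *
          x ^ ((i : ℤ) - (r : ℤ))
      = (2 * (π : ℂ) * Complex.I)⁻¹ *
          ∮ y in C(0, ε), (x - y)⁻¹ * (1 + y⁻¹ + (1 + y) * F (1 + y)) ^ l := by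
  have hx0 : x ≠ 0 := by
    intro h; rw [h] at hx; simp at hx; linarith
  have hxy : ∀ y ∈ Metric.closedBall (0 : ℂ) ε, x - y ≠ 0 := by
    intro y hy
    rw [Metric.mem_closedBall, dist_zero_right] at hy
    intro h
    rw [sub_eq_zero] at h
    rw [h] at hx
    linarith
  have hy0 : ∀ y ∈ Metric.sphere (0 : ℂ) ε, y ≠ 0 := by
    intro y hy
    rw [Metric.mem_sphere, dist_zero_right] at hy
    intro h; rw [h] at hy; simp at hy; linarith
  set g : ℕ → ℂ → ℂ := fun r y => (1 + y) ^ l * F (1 + y) ^ (l - r) with hgdef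
  have hganal : ∀ r, AnalyticOnNhd ℂ (g r) (Metric.closedBall 0 ε) := by
    intro r y hy
    rw [Metric.mem_closedBall, dist_zero_right] at hy
    have h1y : (1 : ℂ) + y ∈ Metric.ball (1 : ℂ) δ := by
      rw [Metric.mem_ball, dist_eq_norm]
      calc ‖1 + y - 1‖ = ‖y‖ := by ring_nf
      _ ≤ ε := hy
      _ < δ := by linarith
    exact ((analyticAt_const.add analyticAt_id).pow l).mul
      (((hF _ h1y).comp (analyticAt_const.add analyticAt_id)).pow (l - r))
  have hgcont : ∀ r, ContinuousOn (g r) (Metric.closedBall 0 ε) :=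
    fun r => (hganal r).continuousOn
  have hps : ∀ r, HasFPowerSeriesOnBall (g r) (cauchyPowerSeries (g r) 0 ε) 0 ε.toNNReal := by
    intro r
    have hd : DifferentiableOn ℂ (g r) (Metric.closedBall 0 (ε.toNNReal : ℝ)) := by
      rw [Real.coe_toNNReal _ hε.le]
      exact (hganal r).differentiableOn
    have := hd.hasFPowerSeriesOnBall (by simpa using hε)
    rwa [Real.coe_toNNReal _ hε.le] at this
  -- notation for the coefficient integrals
  set A : ℕ → ℕ → ℂ := fun r i => ∮ z in C(0, ε), (z⁻¹) ^ i * (z⁻¹ * g r z) with hAdef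
  have hcoeff : ∀ r i, iteratedDeriv i (fun u : ℂ => u ^ l * F u ^ (l - r)) 1 / (i.factorial : ℂ)
      = (2 * (π : ℂ) * Complex.I)⁻¹ * A r i := by
    intro r i
    have h1 : iteratedDeriv i (g r) 0 = iteratedDeriv i (fun u : ℂ => u ^ l * F u ^ (l - r)) 1 := by
      have h := congrFun (iteratedDeriv_comp_const_add i (fun u : ℂ => u ^ l * F u ^ (l - r)) 1) 0
      simpa using h
    have h2 := (hps r).factorial_smul (y := (1 : ℂ)) i
    rw [← iteratedDeriv_eq_iteratedFDeriv] at h2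
    have h3 : (cauchyPowerSeries (g r) 0 ε i) (fun _ => (1 : ℂ))
        = (2 * (π : ℂ) * Complex.I)⁻¹ * A r i := by
      simp [cauchyPowerSeries, ContinuousMultilinearMap.mkPiRing_apply, smul_eq_mul, hAdef]
    rw [h3] at h2
    rw [← h1, ← h2, nsmul_eq_mul, mul_div_cancel_left₀]
    exact_mod_cast i.factorial_ne_zero
  have hsub : Metric.sphere (0:ℂ) ε ⊆ Metric.closedBall (0:ℂ) ε := Metric.sphere_subset_closedBall
  have hinv : ContinuousOn (fun y : ℂ => y⁻¹) (Metric.sphere 0 ε) :=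
    ContinuousOn.inv₀ continuousOn_id (fun y hy => hy0 y hy)
  have hIntA : ∀ r i, CircleIntegrable (fun y : ℂ => (y⁻¹) ^ i * (y⁻¹ * g r y)) 0 ε := by
    intro r i
    exact ContinuousOn.circleIntegrable hε.le
      ((hinv.pow i).mul (hinv.mul ((hgcont r).mono hsub)))
  have hIntB : ∀ r, CircleIntegrable (fun y : ℂ => (x - y)⁻¹ * g r y) 0 ε := by
    intro r
    exact ContinuousOn.circleIntegrable hε.le
      (((continuousOn_const.sub continuousOn_id).inv₀ fun y hy => hxy y (hsub hy)).mul
        ((hgcont r).mono hsub))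
  have hB : ∀ r, (∮ y in C(0, ε), (x - y)⁻¹ * g r y) = 0 := by
    intro r
    apply Complex.circleIntegral_eq_zero_of_differentiable_on_off_countable hε.le
      Set.countable_empty
    · exact ((continuousOn_const.sub continuousOn_id).inv₀ fun y hy => hxy y hy).mul (hgcont r)
    · intro z hz
      have hz' : z ∈ Metric.closedBall (0:ℂ) ε := Metric.ball_subset_closedBall hz.1
      exact (((differentiableAt_const x).sub differentiableAt_id).inv (hxy z hz')).mul
        ((hganal r z hz').differentiableAt)
  have hpoint : Set.EqOn (fun y : ℂ => (x - y)⁻¹ * (1 + y⁻¹ + (1 + y) * F (1 + y)) ^ l)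
      (fun y : ℂ => ∑ r ∈ Finset.range (l+1), (l.choose r : ℂ) *
        (∑ i ∈ Finset.range r, x ^ ((i:ℤ) - (r:ℤ)) * ((y⁻¹) ^ i * (y⁻¹ * g r y))
          + (x ^ (r:ℤ))⁻¹ * ((x - y)⁻¹ * g r y)))
      (Metric.sphere 0 ε) := by
    intro y hy
    have hy' : y ≠ 0 := hy0 y hy
    have hxy' : x - y ≠ 0 := hxy y (hsub hy)
    simp only
    have hfac : (1 + y⁻¹ + (1 + y) * F (1 + y)) = (1 + y) * (y⁻¹ + F (1 + y)) := by
      field_simp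
      ring
    rw [hfac, mul_pow, add_pow y⁻¹ (F (1 + y)) l, Finset.mul_sum, Finset.mul_sum]
    refine Finset.sum_congr rfl fun r _ => ?_
    have key := keyK x y hx0 hy' hxy' r
    have h1 : (x - y)⁻¹ * ((1 + y) ^ l * ((y⁻¹) ^ r * F (1 + y) ^ (l - r) * (l.choose r : ℂ)))
        = ((x - y)⁻¹ * (y⁻¹) ^ r) * ((l.choose r : ℂ) * g r y) := by
      simp only [hgdef]
      ring
    rw [h1, key, add_mul, Finset.sum_mul, mul_add, Finset.mul_sum]
    congr 1
    · exact Finset.sum_congr rfl fun i _ => by ring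
    · ring
  have hIntPr : ∀ r : ℕ, CircleIntegrable
      (fun y : ℂ => ∑ i ∈ Finset.range r, x ^ ((i:ℤ) - (r:ℤ)) * ((y⁻¹) ^ i * (y⁻¹ * g r y))) 0 ε :=
    fun r => circleIntegrable_sum _ _ fun i _ => (hIntA r i).const_mul'' _
  have hIntQr : ∀ r : ℕ, CircleIntegrable (fun y : ℂ => (x ^ (r:ℤ))⁻¹ * ((x - y)⁻¹ * g r y)) 0 ε :=
    fun r => (hIntB r).const_mul'' _
  rw [circleIntegral.integral_congr hε.le hpoint]
  have hs1 := circleIntegral_finset_sum (Finset.range (l+1))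
    (fun r z => (l.choose r : ℂ) *
      (∑ i ∈ Finset.range r, x ^ ((i:ℤ) - (r:ℤ)) * ((z⁻¹) ^ i * (z⁻¹ * g r z))
        + (x ^ (r:ℤ))⁻¹ * ((x - z)⁻¹ * g r z))) 0 ε
    (fun r _ => ((hIntPr r).add (hIntQr r)).const_mul'' _)
  rw [hs1]
  have hIr : ∀ r ∈ Finset.range (l+1),
      (∮ y in C(0, ε), (l.choose r : ℂ) *
        (∑ i ∈ Finset.range r, x ^ ((i:ℤ) - (r:ℤ)) * ((y⁻¹) ^ i * (y⁻¹ * g r y))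
          + (x ^ (r:ℤ))⁻¹ * ((x - y)⁻¹ * g r y)))
      = (l.choose r : ℂ) * ∑ i ∈ Finset.range r, x ^ ((i:ℤ) - (r:ℤ)) * A r i := by
    intro r _
    have ha := circleIntegral_add' (hIntPr r) (hIntQr r)
    have hs2 := circleIntegral_finset_sum (Finset.range r)
      (fun i z => x ^ ((i:ℤ) - (r:ℤ)) * ((z⁻¹) ^ i * (z⁻¹ * g r z))) 0 ε
      (fun i _ => (hIntA r i).const_mul'' _)
    rw [circleIntegral.integral_const_mul, ha, hs2, circleIntegral.integral_const_mul, hB r,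
      mul_zero, add_zero]
    congr 1
    exact Finset.sum_congr rfl fun i _ => circleIntegral.integral_const_mul _ _ _ _
  rw [Finset.sum_congr rfl hIr, Finset.mul_sum]
  refine Finset.sum_congr rfl fun r _ => ?_
  simp only [hcoeff]
  rw [Finset.mul_sum, Finset.mul_sum]
  exact Finset.sum_congr rfl fun i _ => by ring
end

section
/- Suppose the series ∑_{λ ∈ GT_N} c_λ s_λ(x₁,...,x_N), with nonnegative real coefficients c_λ, converges absolutely in an open neighborhood of the N-dimensional torus. Let m_λ be reals satisfying |m_λ| ≤ C(|λ₁|^k + ... + |λ_N|^k) for some C > 0 and k ∈ ℕ. Then ∑_{λ ∈ GT_N} m_λ c_λ s_λ(x₁,...,x_N) also converges absolutely in an open neighborhood of the N-dimensional torus. -/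
open scoped BigOperators

/-- Signatures of length `N`: non-increasing integer `N`-tuples. -/
def Sig (N : ℕ) := {l : Fin N → ℤ // ∀ i j : Fin N, i ≤ j → l j ≤ l i}

/-- Vandermonde determinant `∏_{i<j} (x_i - x_j)`. -/
noncomputable def vand {N : ℕ} (x : Fin N → ℂ) : ℂ :=
  ∏ i : Fin N, ∏ j ∈ Finset.Ioi i, (x i - x j)

/-- Schur (Laurent) function `det[x_i^{λ_j + N - j}] / ∏_{i<j}(x_i - x_j)`. -/
noncomputable def schur {N : ℕ} (l : Fin N → ℤ) (x : Fin N → ℂ) : ℂ :=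
  Matrix.det (Matrix.of fun i j : Fin N => x i ^ (l j + (N : ℤ) - 1 - ((j : ℕ) : ℤ))) / vand x

namespace SchurAux

open Finset

lemma exp_zpow (y : ℝ) (n : ℤ) : (Real.exp y) ^ n = Real.exp (y * n) := by
  rw [← Real.rpow_intCast, Real.rpow_def_of_pos (Real.exp_pos y), Real.log_exp]

/-- triangular sum swap -/
lemma tri {N : ℕ} (f : Fin N → ℝ) :
    ∑ i : Fin N, ∑ j ∈ Ioi i, f j = ∑ j : Fin N, ((j : ℕ) : ℝ) * f j := by
  have h2 : ∀ j : Fin N, ((j : ℕ) : ℝ) * f j = ∑ _i ∈ Iio j, f j := by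
    intro j
    rw [Finset.sum_const, Fin.card_Iio, nsmul_eq_mul]
  calc ∑ i : Fin N, ∑ j ∈ Ioi i, f j
      = ∑ x ∈ Finset.univ.sigma (fun i : Fin N => Ioi i), f x.2 := by
        rw [Finset.sum_sigma]
    _ = ∑ x ∈ Finset.univ.sigma (fun j : Fin N => Iio j), f x.1 := by
        refine Finset.sum_nbij' (fun x => ⟨x.2, x.1⟩) (fun x => ⟨x.2, x.1⟩) ?_ ?_ ?_ ?_ ?_ <;>
          simp [Finset.mem_sigma, Finset.mem_Ioi, Finset.mem_Iio]
    _ = ∑ j : Fin N, ∑ _i ∈ Iio j, f j := by rw [Finset.sum_sigma]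
    _ = ∑ j : Fin N, ((j : ℕ) : ℝ) * f j := by
        exact Finset.sum_congr rfl fun j _ => (h2 j).symm

/-- the special evaluation point: `x_i = exp(s (t - i))` -/
noncomputable def pt (N : ℕ) (s : ℝ) (t : ℤ) : Fin N → ℂ :=
  fun i => ((Real.exp (s * ((t : ℝ) - ((i : ℕ) : ℝ))) : ℝ) : ℂ)

/-- real Vandermonde at the special point -/
noncomputable def vR (N : ℕ) (s : ℝ) (t : ℤ) : ℝ :=
  ∏ i : Fin N, ∏ j ∈ Ioi i,
    (Real.exp (s * ((t : ℝ) - ((i : ℕ) : ℝ))) - Real.exp (s * ((t : ℝ) - ((j : ℕ) : ℝ))))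

lemma vR_pos (N : ℕ) {s : ℝ} (hs : 0 < s) (t : ℤ) : 0 < vR N s t := by
  refine Finset.prod_pos fun i _ => Finset.prod_pos fun j hj => ?_
  have hij : i < j := Finset.mem_Ioi.mp hj
  have hij' : ((i : ℕ) : ℝ) < ((j : ℕ) : ℝ) := by exact_mod_cast hij
  have : Real.exp (s * ((t : ℝ) - ((j : ℕ) : ℝ))) < Real.exp (s * ((t : ℝ) - ((i : ℕ) : ℝ))) := by
    apply Real.exp_lt_exp.mpr
    nlinarith
  linarith

lemma vand_pt (N : ℕ) (s : ℝ) (t : ℤ) : vand (pt N s t) = ((vR N s t : ℝ) : ℂ) := by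
  unfold vand pt vR
  push_cast
  rfl

lemma det_pt (N : ℕ) (s : ℝ) (t : ℤ) (a : Fin N → ℤ) :
    (Matrix.of fun i j : Fin N => pt N s t i ^ a j).det
      = ((((∏ j : Fin N, Real.exp (s * (t : ℝ) * ((a j : ℤ) : ℝ))) *
          ∏ i : Fin N, ∏ j ∈ Ioi i,
            (Real.exp (-(s * ((a j : ℤ) : ℝ))) - Real.exp (-(s * ((a i : ℤ) : ℝ))))) : ℝ) : ℂ) := by
  have key : (Matrix.of fun i j : Fin N => pt N s t i ^ a j)
      = Complex.ofRealHom.mapMatrix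
          (Matrix.of fun i j : Fin N =>
            Real.exp (s * (t : ℝ) * ((a j : ℤ) : ℝ)) * Real.exp (-(s * ((a j : ℤ) : ℝ))) ^ (i : ℕ)) := by
    ext i j
    simp only [Matrix.of_apply, RingHom.mapMatrix_apply, Matrix.map_apply, pt,
      Complex.ofRealHom_eq_coe]
    rw [← Complex.ofReal_zpow, exp_zpow]
    congr 1
    rw [← Real.exp_nat_mul, ← Real.exp_add]
    congr 1
    ring
  rw [key, ← RingHom.map_det]
  have h2 : (Matrix.of fun i j : Fin N =>
        Real.exp (s * (t : ℝ) * ((a j : ℤ) : ℝ)) * Real.exp (-(s * ((a j : ℤ) : ℝ))) ^ (i : ℕ))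
      = Matrix.of fun i j : Fin N =>
          (fun j' : Fin N => Real.exp (s * (t : ℝ) * ((a j' : ℤ) : ℝ))) j *
          (Matrix.vandermonde fun j' : Fin N => Real.exp (-(s * ((a j' : ℤ) : ℝ)))).transpose i j := rfl
  rw [h2, Matrix.det_mul_row, Matrix.det_transpose, Matrix.det_vandermonde]
  rfl

/-- lower bound for the real determinant value at the special point -/
lemma detR_lower (N : ℕ) {s : ℝ} (hs : 0 < s) (t : ℤ) (a : Fin N → ℤ)
    (ha : ∀ i j : Fin N, i < j → a j + 1 ≤ a i) :
    (1 - Real.exp (-s)) ^ (∑ i : Fin N, (Ioi i).card) *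
      Real.exp (s * ((∑ j : Fin N, (t - ((j : ℕ) : ℤ)) * a j : ℤ) : ℝ))
    ≤ (∏ j : Fin N, Real.exp (s * (t : ℝ) * ((a j : ℤ) : ℝ))) *
      ∏ i : Fin N, ∏ j ∈ Ioi i,
        (Real.exp (-(s * ((a j : ℤ) : ℝ))) - Real.exp (-(s * ((a i : ℤ) : ℝ)))) := by
  have he : 0 < 1 - Real.exp (-s) := by
    have : Real.exp (-s) < 1 := Real.exp_lt_one_iff.mpr (by linarith)
    linarith
  have expo : s * ((∑ j : Fin N, (t - ((j : ℕ) : ℤ)) * a j : ℤ) : ℝ)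
      = (∑ j : Fin N, s * (t : ℝ) * ((a j : ℤ) : ℝ)) +
        (∑ i : Fin N, ∑ j ∈ Ioi i, (-(s * ((a j : ℤ) : ℝ)))) := by
    rw [tri (fun j => -(s * ((a j : ℤ) : ℝ)))]
    push_cast
    rw [Finset.mul_sum, ← Finset.sum_add_distrib]
    exact Finset.sum_congr rfl fun j _ => by ring
  rw [expo, Real.exp_add, Real.exp_sum]
  simp only [Real.exp_sum]
  have key : (1 - Real.exp (-s)) ^ (∑ i : Fin N, (Ioi i).card) *
      ∏ i : Fin N, ∏ j ∈ Ioi i, Real.exp (-(s * ((a j : ℤ) : ℝ)))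
      ≤ ∏ i : Fin N, ∏ j ∈ Ioi i,
        (Real.exp (-(s * ((a j : ℤ) : ℝ))) - Real.exp (-(s * ((a i : ℤ) : ℝ)))) := by
    have heq : (1 - Real.exp (-s)) ^ (∑ i : Fin N, (Ioi i).card) *
        ∏ i : Fin N, ∏ j ∈ Ioi i, Real.exp (-(s * ((a j : ℤ) : ℝ)))
        = ∏ i : Fin N, ∏ j ∈ Ioi i,
            ((1 - Real.exp (-s)) * Real.exp (-(s * ((a j : ℤ) : ℝ)))) := by
      rw [← Finset.prod_pow_eq_pow_sum, ← Finset.prod_mul_distrib]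
      exact Finset.prod_congr rfl fun i _ => by
        rw [← Finset.prod_const, ← Finset.prod_mul_distrib]
    rw [heq]
    refine Finset.prod_le_prod (fun i _ => Finset.prod_nonneg fun j _ =>
      mul_nonneg he.le (Real.exp_pos _).le) (fun i _ => ?_)
    refine Finset.prod_le_prod (fun j _ => mul_nonneg he.le (Real.exp_pos _).le) (fun j hj => ?_)
    have hij : i < j := Finset.mem_Ioi.mp hj
    have hgap := ha i j hij
    have hgap' : ((a j : ℤ) : ℝ) + 1 ≤ ((a i : ℤ) : ℝ) := by exact_mod_cast hgap
    have h1 : Real.exp (-(s * ((a i : ℤ) : ℝ)))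
        ≤ Real.exp (-s) * Real.exp (-(s * ((a j : ℤ) : ℝ))) := by
      rw [← Real.exp_add]
      apply Real.exp_le_exp.mpr
      nlinarith
    nlinarith [Real.exp_pos (-(s * ((a j : ℤ) : ℝ)))]
  calc ((1 - Real.exp (-s)) ^ (∑ i : Fin N, (Ioi i).card)) *
        ((∏ j : Fin N, Real.exp (s * (t : ℝ) * ((a j : ℤ) : ℝ))) *
          ∏ i : Fin N, ∏ j ∈ Ioi i, Real.exp (-(s * ((a j : ℤ) : ℝ))))
      = (∏ j : Fin N, Real.exp (s * (t : ℝ) * ((a j : ℤ) : ℝ))) *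
        ((1 - Real.exp (-s)) ^ (∑ i : Fin N, (Ioi i).card) *
          ∏ i : Fin N, ∏ j ∈ Ioi i, Real.exp (-(s * ((a j : ℤ) : ℝ)))) := by ring
    _ ≤ _ := mul_le_mul_of_nonneg_left key (Finset.prod_nonneg fun j _ => (Real.exp_pos _).le)

noncomputable def Kc (N : ℕ) (s : ℝ) (t : ℤ) : ℝ :=
  (1 - Real.exp (-s)) ^ (∑ i : Fin N, (Ioi i).card) *
    Real.exp (s * ((∑ j : Fin N, (t - ((j : ℕ) : ℤ)) * ((N : ℤ) - 1 - ((j : ℕ) : ℤ)) : ℤ) : ℝ)) /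
    vR N s t

lemma Kc_pos (N : ℕ) {s : ℝ} (hs : 0 < s) (t : ℤ) : 0 < Kc N s t := by
  have he : Real.exp (-s) < 1 := Real.exp_lt_one_iff.mpr (by linarith)
  exact div_pos (mul_pos (pow_pos (by linarith) _) (Real.exp_pos _)) (vR_pos N hs t)

lemma schur_pt_lower (N : ℕ) {s : ℝ} (hs : 0 < s) (t : ℤ) (l : Fin N → ℤ)
    (hl : ∀ i j : Fin N, i ≤ j → l j ≤ l i) :
    Kc N s t * Real.exp (s * ((∑ j : Fin N, (t - ((j : ℕ) : ℤ)) * l j : ℤ) : ℝ))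
      ≤ ‖schur l (pt N s t)‖ := by
  set a : Fin N → ℤ := fun j => l j + (N : ℤ) - 1 - ((j : ℕ) : ℤ) with ha_def
  have ha : ∀ i j : Fin N, i < j → a j + 1 ≤ a i := by
    intro i j hij
    have h1 := hl i j hij.le
    have h2 : (i : ℕ) < (j : ℕ) := hij
    simp only [ha_def]
    omega
  have hd : schur l (pt N s t)
      = ((((∏ j : Fin N, Real.exp (s * (t : ℝ) * ((a j : ℤ) : ℝ))) *
          ∏ i : Fin N, ∏ j ∈ Ioi i,
            (Real.exp (-(s * ((a j : ℤ) : ℝ))) - Real.exp (-(s * ((a i : ℤ) : ℝ))))) : ℝ) : ℂ) /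
        ((vR N s t : ℝ) : ℂ) := by
    unfold schur
    rw [vand_pt]
    rw [show (Matrix.of fun i j : Fin N => pt N s t i ^ (l j + (N : ℤ) - 1 - ((j : ℕ) : ℤ)))
        = (Matrix.of fun i j : Fin N => pt N s t i ^ a j) from rfl, det_pt]
  rw [hd, norm_div, Complex.norm_real, Complex.norm_real, Real.norm_eq_abs, Real.norm_eq_abs,
    abs_of_pos (vR_pos N hs t),
    le_div_iff₀ (vR_pos N hs t)]
  have hnum := detR_lower N hs t a ha
  have hsplit : (∑ j : Fin N, (t - ((j : ℕ) : ℤ)) * a j)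
      = (∑ j : Fin N, (t - ((j : ℕ) : ℤ)) * l j) +
        ∑ j : Fin N, (t - ((j : ℕ) : ℤ)) * ((N : ℤ) - 1 - ((j : ℕ) : ℤ)) := by
    rw [← Finset.sum_add_distrib]
    exact Finset.sum_congr rfl fun j _ => by simp only [ha_def]; ring
  have keyeq : Kc N s t * Real.exp (s * ((∑ j : Fin N, (t - ((j : ℕ) : ℤ)) * l j : ℤ) : ℝ)) *
        vR N s t
      = (1 - Real.exp (-s)) ^ (∑ i : Fin N, (Ioi i).card) *
        Real.exp (s * ((∑ j : Fin N, (t - ((j : ℕ) : ℤ)) * a j : ℤ) : ℝ)) := by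
    rw [hsplit]
    unfold Kc
    push_cast
    rw [mul_add, Real.exp_add]
    field_simp [(vR_pos N hs t).ne']
  rw [keyeq]
  exact le_trans hnum (le_abs_self _)

/-- the combinatorial choice of the evaluation point -/
lemma exists_good_t (N : ℕ) (hN : 0 < N) (l : Fin N → ℤ)
    (hl : ∀ i j : Fin N, i ≤ j → l j ≤ l i) :
    ∃ t ∈ Finset.Icc (-1 : ℤ) (N : ℤ), ∀ j0 : Fin N,
      (((l j0).natAbs : ℤ)) ≤ ∑ j : Fin N, (t - ((j : ℕ) : ℤ)) * l j := by
  classical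
  set i0 : Fin N := ⟨0, hN⟩ with hi0
  set iN : Fin N := ⟨N - 1, by omega⟩ with hiN
  have hle : ∀ j : Fin N, l iN ≤ l j ∧ l j ≤ l i0 := by
    intro j
    constructor
    · exact hl j iN (by simp [hiN, Fin.le_def]; omega)
    · exact hl i0 j (by simp [hi0, Fin.le_def])
  have habs : ∀ j0 : Fin N, ((l j0).natAbs : ℤ) ≤ max (l i0) (-(l iN)) := by
    intro j0
    have h1 := (hle j0).1
    have h2 := (hle j0).2
    rw [← Int.abs_eq_natAbs]
    apply abs_le.mpr
    constructor
    · have := le_max_right (l i0) (-(l iN))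
      linarith
    · have := le_max_left (l i0) (-(l iN))
      linarith
  suffices h : ∃ t ∈ Finset.Icc (-1 : ℤ) (N : ℤ),
      max (l i0) (-(l iN)) ≤ ∑ j : Fin N, (t - ((j : ℕ) : ℤ)) * l j by
    obtain ⟨t, ht, hM⟩ := h
    exact ⟨t, ht, fun j0 => (habs j0).trans hM⟩
  have hi0v : ((i0 : ℕ) : ℤ) = 0 := by simp [hi0]
  have hiNv : ((iN : ℕ) : ℤ) = (N : ℤ) - 1 := by simp [hiN]; omega
  by_cases hpos : ∀ j, 0 < l j
  · -- all positive : t = N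
    refine ⟨(N : ℤ), by rw [Finset.mem_Icc]; omega, ?_⟩
    have hterm : ∀ j : Fin N, 0 ≤ ((N : ℤ) - ((j : ℕ) : ℤ)) * l j := by
      intro j
      have hj := j.isLt
      exact mul_nonneg (by omega) (hpos j).le
    have hd : max (l i0) (-(l iN)) ≤ ((N : ℤ) - ((i0 : ℕ) : ℤ)) * l i0 := by
      rw [hi0v]
      have h1 := hpos i0
      have h2 := hpos iN
      apply max_le
      · nlinarith [(show (1 : ℤ) ≤ (N : ℤ) by omega)]
      · nlinarith [(show (1 : ℤ) ≤ (N : ℤ) by omega)]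
    exact hd.trans (Finset.single_le_sum (fun j _ => hterm j) (Finset.mem_univ i0))
  · push_neg at hpos
    by_cases hneg : ∀ j, l j < 0
    · -- all negative : t = -1
      refine ⟨(-1 : ℤ), by rw [Finset.mem_Icc]; omega, ?_⟩
      have hterm : ∀ j : Fin N, 0 ≤ ((-1 : ℤ) - ((j : ℕ) : ℤ)) * l j := by
        intro j
        have hj : (0 : ℤ) ≤ ((j : ℕ) : ℤ) := by positivity
        nlinarith [hneg j]
      have hd : max (l i0) (-(l iN)) ≤ ((-1 : ℤ) - ((iN : ℕ) : ℤ)) * l iN := by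
        rw [hiNv]
        have h1 := hneg iN
        have h2 := hneg i0
        apply max_le
        · nlinarith [(show (1 : ℤ) ≤ (N : ℤ) by omega)]
        · nlinarith [(show (1 : ℤ) ≤ (N : ℤ) by omega)]
      exact hd.trans (Finset.single_le_sum (fun j _ => hterm j) (Finset.mem_univ iN))
    · push_neg at hneg
      obtain ⟨jm, hjm⟩ := hpos  -- l jm ≤ 0
      obtain ⟨jp, hjp⟩ := hneg  -- 0 ≤ l jp
      rcases le_or_gt (-(l iN)) (l i0) with hA | hB
      · -- case A : pivot = first nonpositive entry
        set S : Finset (Fin N) := Finset.univ.filter (fun j => l j ≤ 0) with hS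
        have hSne : S.Nonempty := ⟨jm, by simp [hS, hjm]⟩
        set p := S.min' hSne with hp
        have hpS : l p ≤ 0 := by
          have := S.min'_mem hSne
          simp [hS] at this
          exact this
        have hlt : ∀ j : Fin N, j < p → 0 < l j := by
          intro j hj
          by_contra hcon
          push_neg at hcon
          exact absurd (S.min'_le j (by simp [hS, hcon])) (not_le.mpr hj)
        have hterm : ∀ j : Fin N, 0 ≤ (((p : ℕ) : ℤ) - ((j : ℕ) : ℤ)) * l j := by
          intro j
          rcases lt_trichotomy j p with h | h | h
          · have hv : ((j : ℕ) : ℤ) < ((p : ℕ) : ℤ) := by exact_mod_cast (show (j:ℕ) < (p:ℕ) from h)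
            exact mul_nonneg (by omega) (hlt j h).le
          · simp [h]
          · have h1 : l j ≤ 0 := le_trans (hl p j h.le) hpS
            have hv : ((p : ℕ) : ℤ) < ((j : ℕ) : ℤ) := by exact_mod_cast (show (p:ℕ) < (j:ℕ) from h)
            nlinarith
        refine ⟨((p : ℕ) : ℤ), by rw [Finset.mem_Icc]; have := p.isLt; omega, ?_⟩
        rcases Nat.eq_zero_or_pos (p : ℕ) with hp0 | hp1
        · -- p = i0 : M' = 0
          have hpe : p = i0 := Fin.ext (by omega)
          have h0 : l i0 ≤ 0 := hpe ▸ hpS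
          have : max (l i0) (-(l iN)) ≤ 0 := max_le h0 (hA.trans h0)
          exact this.trans (Finset.sum_nonneg fun j _ => hterm j)
        · have hi0p : i0 < p := by
            rw [Fin.lt_def]
            simpa [hi0] using hp1
          have hlp : 0 < l i0 := hlt i0 hi0p
          have hd : max (l i0) (-(l iN)) ≤ (((p : ℕ) : ℤ) - ((i0 : ℕ) : ℤ)) * l i0 := by
            rw [hi0v]
            have hp1' : (1 : ℤ) ≤ ((p : ℕ) : ℤ) := by exact_mod_cast hp1
            apply max_le
            · nlinarith
            · nlinarith
          exact hd.trans (Finset.single_le_sum (fun j _ => hterm j) (Finset.mem_univ i0))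
      · -- case B : pivot = last nonnegative entry
        set S : Finset (Fin N) := Finset.univ.filter (fun j => 0 ≤ l j) with hS
        have hSne : S.Nonempty := ⟨jp, by simp [hS, hjp]⟩
        set r := S.max' hSne with hr
        have hrS : 0 ≤ l r := by
          have := S.max'_mem hSne
          simp [hS] at this
          exact this
        have hgt : ∀ j : Fin N, r < j → l j < 0 := by
          intro j hj
          by_contra hcon
          push_neg at hcon
          exact absurd (S.le_max' j (by simp [hS, hcon])) (not_le.mpr hj)
        have hiNneg : l iN < 0 := by
          have := (hle iN).2
          linarith
        have hrN : (r : ℕ) < N - 1 := by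
          by_contra hcon
          push_neg at hcon
          have : r = iN := Fin.ext (by have := r.isLt; omega)
          rw [this] at hrS
          linarith
        have hterm : ∀ j : Fin N, 0 ≤ (((r : ℕ) : ℤ) - ((j : ℕ) : ℤ)) * l j := by
          intro j
          rcases lt_trichotomy j r with h | h | h
          · have h1 : 0 ≤ l j := le_trans hrS (hl j r h.le)
            have hv : ((j : ℕ) : ℤ) < ((r : ℕ) : ℤ) := by exact_mod_cast (show (j:ℕ) < (r:ℕ) from h)
            exact mul_nonneg (by omega) h1
          · simp [h]
          · have h1 : l j < 0 := hgt j h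
            have hv : ((r : ℕ) : ℤ) < ((j : ℕ) : ℤ) := by exact_mod_cast (show (r:ℕ) < (j:ℕ) from h)
            nlinarith
        refine ⟨((r : ℕ) : ℤ), by rw [Finset.mem_Icc]; have := r.isLt; omega, ?_⟩
        have hd : max (l i0) (-(l iN)) ≤ (((r : ℕ) : ℤ) - ((iN : ℕ) : ℤ)) * l iN := by
          rw [hiNv]
          have hco : (((r : ℕ) : ℤ) - ((N : ℤ) - 1)) ≤ -1 := by
            have : ((r : ℕ) : ℤ) < (N : ℤ) - 1 := by omega
            omega
          apply max_le
          · nlinarith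
          · nlinarith
        exact hd.trans (Finset.single_le_sum (fun j _ => hterm j) (Finset.mem_univ iN))


lemma zpow_le_rho {b ρ : ℝ} (hb : 0 < b) (h1 : b ≤ ρ) (h2 : b⁻¹ ≤ ρ) (n : ℤ) :
    b ^ n ≤ ρ ^ n.natAbs := by
  rcases le_or_gt 0 n with h | h
  · lift n to ℕ using h
    rw [zpow_natCast, Int.natAbs_natCast]
    exact pow_le_pow_left₀ hb.le h1 n
  · have hneg : b ^ n = b⁻¹ ^ n.natAbs := by
      rw [← zpow_natCast b⁻¹, inv_zpow, ← zpow_neg]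
      congr 1
      omega
    rw [hneg]
    exact pow_le_pow_left₀ (inv_nonneg.mpr hb.le) h2 _

lemma abs_det_le (N : ℕ) (x : Fin N → ℂ) (ρ : ℝ) (hρ : 1 ≤ ρ)
    (hx1 : ∀ i, ‖x i‖ ≤ ρ) (hx3 : ∀ i, (‖x i‖)⁻¹ ≤ ρ)
    (hx0 : ∀ i, x i ≠ 0)
    (a : Fin N → ℤ) (mb : ℕ) (hab : ∀ j, (a j).natAbs ≤ mb) :
    ‖(Matrix.of fun i j : Fin N => x i ^ a j).det‖
      ≤ (N.factorial : ℝ) * ρ ^ (N * mb) := by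
  rw [Matrix.det_apply']
  refine le_trans (norm_sum_le _ _) ?_
  have hterm : ∀ σ : Equiv.Perm (Fin N),
      ‖(((Equiv.Perm.sign σ : ℤ) : ℂ)) *
        ∏ i : Fin N, (Matrix.of fun i j : Fin N => x i ^ a j) (σ i) i‖ ≤ ρ ^ (N * mb) := by
    intro σ
    rw [norm_mul]
    have h1 : ‖((Equiv.Perm.sign σ : ℤ) : ℂ)‖ = 1 := by
      rcases Int.units_eq_one_or (Equiv.Perm.sign σ) with h | h <;> simp [h]
    rw [h1, one_mul, norm_prod]
    have h2 : ∀ i : Fin N, ‖(Matrix.of fun i j : Fin N => x i ^ a j) (σ i) i‖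
        ≤ ρ ^ mb := by
      intro i
      simp only [Matrix.of_apply]
      rw [norm_zpow]
      calc ‖x (σ i)‖ ^ (a i)
          ≤ ρ ^ (a i).natAbs :=
            zpow_le_rho (norm_pos_iff.mpr (hx0 (σ i))) (hx1 _) (hx3 _) _
        _ ≤ ρ ^ mb := pow_le_pow_right₀ hρ (hab i)
    calc ∏ i : Fin N, ‖(Matrix.of fun i j : Fin N => x i ^ a j) (σ i) i‖
        ≤ ∏ _i : Fin N, ρ ^ mb :=
          Finset.prod_le_prod (fun i _ => norm_nonneg _) (fun i _ => h2 i)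
      _ = ρ ^ (N * mb) := by
          rw [Finset.prod_const, Finset.card_univ, Fintype.card_fin, ← pow_mul, Nat.mul_comm]
  calc ∑ σ : Equiv.Perm (Fin N), ‖(((Equiv.Perm.sign σ : ℤ) : ℂ)) *
        ∏ i : Fin N, (Matrix.of fun i j : Fin N => x i ^ a j) (σ i) i‖
      ≤ ∑ _σ : Equiv.Perm (Fin N), ρ ^ (N * mb) :=
        Finset.sum_le_sum fun σ _ => hterm σ
    _ = (N.factorial : ℝ) * ρ ^ (N * mb) := by
        rw [Finset.sum_const, Finset.card_univ, Fintype.card_perm, nsmul_eq_mul, Fintype.card_fin]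


lemma pow_le_exp_aux (k : ℕ) {s y : ℝ} (hs : 0 < s) (hy : 0 ≤ y) :
    y ^ k ≤ (k.factorial : ℝ) * (2 / s) ^ k * Real.exp (s / 2 * y) := by
  have hx : 0 ≤ s / 2 * y := by positivity
  have h1 : (s / 2 * y) ^ k / (k.factorial : ℝ) ≤ Real.exp (s / 2 * y) := by
    refine le_trans ?_ (Real.sum_le_exp_of_nonneg hx (k + 1))
    exact Finset.single_le_sum (f := fun i => (s / 2 * y) ^ i / (i.factorial : ℝ))
      (fun i _ => by positivity) (Finset.self_mem_range_succ k)
  have hfac : (0 : ℝ) < (k.factorial : ℝ) := by positivity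
  have key : y ^ k = (2 / s) ^ k * (s / 2 * y) ^ k := by
    rw [← mul_pow]
    congr 1
    field_simp
  rw [key]
  rw [div_le_iff₀ hfac] at h1
  calc (2 / s) ^ k * (s / 2 * y) ^ k
      ≤ (2 / s) ^ k * (Real.exp (s / 2 * y) * (k.factorial : ℝ)) :=
        mul_le_mul_of_nonneg_left h1 (by positivity)
    _ = (k.factorial : ℝ) * (2 / s) ^ k * Real.exp (s / 2 * y) := by ring


end SchurAux

/-- Lemma 4.3: if `∑_λ c_λ s_λ(x)` (with `c_λ ≥ 0`) converges absolutely on a neighborhood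
of the `N`-torus and `|m_λ| ≤ C(|λ₁|^k + ⋯ + |λ_N|^k)`, then `∑_λ m_λ c_λ s_λ(x)` also
converges absolutely on a neighborhood of the torus. -/
theorem schur_series_polynomial_weights (N k : ℕ)
    (c : Sig N → ℝ) (hc : ∀ l, 0 ≤ c l) (m : Sig N → ℝ) (C : ℝ) (hC : 0 < C)
    (hm : ∀ l : Sig N, |m l| ≤ C * ∑ i : Fin N, ((l.1 i).natAbs : ℝ) ^ k)
    (hconv : ∃ ε > (0 : ℝ), ∀ x : Fin N → ℂ,
      (∀ i, 1 - ε < ‖x i‖ ∧ ‖x i‖ < 1 + ε) →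
      Summable (fun l : Sig N => ‖(c l : ℂ) * schur l.1 x‖)) :
    ∃ ε > (0 : ℝ), ∀ x : Fin N → ℂ,
      (∀ i, 1 - ε < ‖x i‖ ∧ ‖x i‖ < 1 + ε) →
      Summable (fun l : Sig N => ‖((m l * c l : ℝ) : ℂ) * schur l.1 x‖) := by
  classical
  obtain ⟨ε, hε, H⟩ := hconv
  rcases Nat.eq_zero_or_pos N with rfl | hN
  · refine ⟨1, one_pos, fun x _ => ?_⟩
    haveI : Subsingleton (Sig 0) := ⟨fun a b => Subtype.ext (funext fun i => i.elim0)⟩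
    haveI : Finite (Sig 0) := Finite.of_subsingleton
    exact Summable.of_finite
  open SchurAux Finset in
  set εm : ℝ := min ε 1 with hεmdef
  have hεm0 : 0 < εm := lt_min hε one_pos
  have hεm1 : εm ≤ 1 := min_le_right _ _
  have hεmε : εm ≤ ε := min_le_left _ _
  set b : ℝ := 1 + εm / 2 with hbdef
  have hb1 : 1 < b := by rw [hbdef]; linarith
  have hb0 : 0 < b := by linarith
  set s : ℝ := Real.log b / (N + 1) with hsdef
  have hs : 0 < s := div_pos (Real.log_pos hb1) (by positivity)
  have hsN : s * (N + 1) = Real.log b := by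
    rw [hsdef]; field_simp
  -- the special points lie in the given neighborhood of the torus
  have hpt_mem : ∀ t ∈ Finset.Icc (-1 : ℤ) (N : ℤ), ∀ i : Fin N,
      1 - ε < ‖pt N s t i‖ ∧ ‖pt N s t i‖ < 1 + ε := by
    intro t ht i
    rw [Finset.mem_Icc] at ht
    have habs : ‖pt N s t i‖ = Real.exp (s * ((t : ℝ) - ((i : ℕ) : ℝ))) := by
      simp only [pt, Complex.norm_real, Real.norm_eq_abs]
      exact abs_of_pos (Real.exp_pos _)
    have hiN : ((i : ℕ) : ℝ) ≤ (N : ℝ) - 1 := by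
      have h1 : (i : ℕ) + 1 ≤ N := i.isLt
      have h2 : ((i : ℕ) : ℝ) + 1 ≤ (N : ℝ) := by exact_mod_cast h1
      linarith
    have hi0 : (0 : ℝ) ≤ ((i : ℕ) : ℝ) := Nat.cast_nonneg _
    have htu : (t : ℝ) ≤ (N : ℝ) := by exact_mod_cast ht.2
    have htl : (-1 : ℝ) ≤ (t : ℝ) := by exact_mod_cast ht.1
    have ht1 : (t : ℝ) - ((i : ℕ) : ℝ) ≤ (N : ℝ) + 1 := by linarith
    have ht2 : -((N : ℝ) + 1) ≤ (t : ℝ) - ((i : ℕ) : ℝ) := by linarith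
    have hup : Real.exp (s * ((t : ℝ) - ((i : ℕ) : ℝ))) ≤ b := by
      calc Real.exp (s * ((t : ℝ) - ((i : ℕ) : ℝ))) ≤ Real.exp (s * ((N : ℝ) + 1)) :=
            Real.exp_le_exp.mpr (mul_le_mul_of_nonneg_left ht1 hs.le)
        _ = b := by rw [show s * ((N : ℝ) + 1) = s * ((N : ℕ) + 1 : ℝ) from rfl, hsN,
              Real.exp_log hb0]
    have hdown : b⁻¹ ≤ Real.exp (s * ((t : ℝ) - ((i : ℕ) : ℝ))) := by
      calc b⁻¹ = Real.exp (-(s * ((N : ℝ) + 1))) := by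
            rw [hsN, Real.exp_neg, Real.exp_log hb0]
        _ ≤ Real.exp (s * ((t : ℝ) - ((i : ℕ) : ℝ))) := by
            apply Real.exp_le_exp.mpr
            nlinarith
    have hbinv : 1 - εm / 2 ≤ b⁻¹ := by
      have hmul : (1 - εm / 2) * b ≤ 1 := by nlinarith
      calc 1 - εm / 2 = (1 - εm / 2) * b * b⁻¹ := by field_simp
        _ ≤ 1 * b⁻¹ := mul_le_mul_of_nonneg_right hmul (inv_nonneg.mpr hb0.le)
        _ = b⁻¹ := one_mul _
    rw [habs]
    constructor
    · have : 1 - ε < 1 - εm / 2 := by linarith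
      linarith
    · have : b < 1 + ε := by rw [hbdef]; linarith
      linarith
  -- summability at the special points
  have Hsp : ∀ t ∈ Finset.Icc (-1 : ℤ) (N : ℤ),
      Summable (fun l : Sig N => c l * ‖schur l.1 (pt N s t)‖) := by
    intro t ht
    refine (H (pt N s t) (hpt_mem t ht)).congr fun l => ?_
    rw [norm_mul, Complex.norm_real, Real.norm_eq_abs, abs_of_nonneg (hc l)]
  -- the dominating series
  have SG : Summable (fun l : Sig N =>
      c l * Real.exp (s * ((Finset.univ.sup fun j => (l.1 j).natAbs : ℕ) : ℝ))) := by
    have hbound : ∀ l : Sig N,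
        c l * Real.exp (s * ((Finset.univ.sup fun j => (l.1 j).natAbs : ℕ) : ℝ))
        ≤ ∑ t ∈ Finset.Icc (-1 : ℤ) (N : ℤ),
            (Kc N s t)⁻¹ * (c l * ‖schur l.1 (pt N s t)‖) := by
      intro l
      obtain ⟨t, ht, hgood⟩ := exists_good_t N hN l.1 l.2
      have hF0 : 0 ≤ ∑ j : Fin N, (t - ((j : ℕ) : ℤ)) * l.1 j :=
        le_trans (Int.natCast_nonneg _) (hgood ⟨0, hN⟩)
      have hMnF : (((Finset.univ.sup fun j => (l.1 j).natAbs : ℕ)) : ℤ)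
          ≤ ∑ j : Fin N, (t - ((j : ℕ) : ℤ)) * l.1 j := by
        have h1 : (Finset.univ.sup fun j => (l.1 j).natAbs)
            ≤ (∑ j : Fin N, (t - ((j : ℕ) : ℤ)) * l.1 j).toNat :=
          Finset.sup_le fun j _ => (Int.le_toNat hF0).mpr (hgood j)
        calc (((Finset.univ.sup fun j => (l.1 j).natAbs : ℕ)) : ℤ)
            ≤ (((∑ j : Fin N, (t - ((j : ℕ) : ℤ)) * l.1 j).toNat : ℕ) : ℤ) := by
              exact_mod_cast h1
          _ = _ := Int.toNat_of_nonneg hF0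
      have hexp : Real.exp (s * ((Finset.univ.sup fun j => (l.1 j).natAbs : ℕ) : ℝ))
          ≤ Real.exp (s * ((∑ j : Fin N, (t - ((j : ℕ) : ℤ)) * l.1 j : ℤ) : ℝ)) := by
        apply Real.exp_le_exp.mpr
        apply mul_le_mul_of_nonneg_left _ hs.le
        exact_mod_cast hMnF
      have hlow := schur_pt_lower N hs t l.1 l.2
      have hK := Kc_pos N hs t
      have h2 : Real.exp (s * ((∑ j : Fin N, (t - ((j : ℕ) : ℤ)) * l.1 j : ℤ) : ℝ))
          ≤ (Kc N s t)⁻¹ * ‖schur l.1 (pt N s t)‖ := by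
        have h3 := mul_le_mul_of_nonneg_left hlow (inv_nonneg.mpr hK.le)
        rwa [← mul_assoc, inv_mul_cancel₀ hK.ne', one_mul] at h3
      calc c l * Real.exp (s * ((Finset.univ.sup fun j => (l.1 j).natAbs : ℕ) : ℝ))
          ≤ c l * Real.exp (s * ((∑ j : Fin N, (t - ((j : ℕ) : ℤ)) * l.1 j : ℤ) : ℝ)) :=
            mul_le_mul_of_nonneg_left hexp (hc l)
        _ ≤ c l * ((Kc N s t)⁻¹ * ‖schur l.1 (pt N s t)‖) :=
            mul_le_mul_of_nonneg_left h2 (hc l)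
        _ = (Kc N s t)⁻¹ * (c l * ‖schur l.1 (pt N s t)‖) := by ring
        _ ≤ _ := Finset.single_le_sum (f := fun t' =>
              (Kc N s t')⁻¹ * (c l * ‖schur l.1 (pt N s t')‖))
              (fun t' _ => mul_nonneg (inv_nonneg.mpr (Kc_pos N hs t').le)
                (mul_nonneg (hc l) (norm_nonneg _))) ht
    refine Summable.of_nonneg_of_le (fun l => mul_nonneg (hc l) (Real.exp_pos _).le) hbound ?_
    exact summable_sum fun t _ => ((Hsp t ‹_›).mul_left _)
  -- choose the final neighborhood
  set ρ : ℝ := Real.exp (s / (2 * N)) with hρdef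
  have hρ1 : 1 < ρ := by
    rw [hρdef, show (1 : ℝ) = Real.exp 0 from Real.exp_zero.symm]
    apply Real.exp_lt_exp.mpr
    positivity
  have hρ0 : 0 < ρ := lt_trans one_pos hρ1
  have hρinv : ρ⁻¹ < 1 := inv_lt_one_of_one_lt₀ hρ1
  refine ⟨min (ρ - 1) (1 - ρ⁻¹), lt_min (by linarith) (by linarith), fun x hx => ?_⟩
  by_cases hv : vand x = 0
  · -- degenerate point: everything vanishes
    have hz : ∀ l : Sig N, schur l.1 x = 0 := by
      intro l
      have hv' := hv
      unfold vand at hv'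
      rw [Finset.prod_eq_zero_iff] at hv'
      obtain ⟨i, _, hv'⟩ := hv'
      rw [Finset.prod_eq_zero_iff] at hv'
      obtain ⟨j, hj, hv'⟩ := hv'
      have hij : i ≠ j := ne_of_lt (Finset.mem_Ioi.mp hj)
      have hxij : x i = x j := sub_eq_zero.mp hv'
      unfold schur
      rw [Matrix.det_zero_of_row_eq hij (funext fun j' => by
        simp only [Matrix.of_apply, hxij]), zero_div]
    exact Summable.congr (f := fun _ : Sig N => (0 : ℝ)) summable_zero
      fun l => by rw [hz l, mul_zero, norm_zero]
  · have hε'1 : 1 + min (ρ - 1) (1 - ρ⁻¹) ≤ ρ := by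
      have := min_le_left (ρ - 1) (1 - ρ⁻¹)
      linarith
    have hε'2 : ρ⁻¹ ≤ 1 - min (ρ - 1) (1 - ρ⁻¹) := by
      have := min_le_right (ρ - 1) (1 - ρ⁻¹)
      linarith
    have hx1 : ∀ i, ‖x i‖ ≤ ρ := fun i => le_trans (hx i).2.le hε'1
    have hx2 : ∀ i, 0 < ‖x i‖ := fun i =>
      lt_trans (lt_of_lt_of_le (inv_pos.mpr hρ0) hε'2) (hx i).1
    have hx3 : ∀ i, (‖x i‖)⁻¹ ≤ ρ := by
      intro i
      have h2 : ρ⁻¹ ≤ ‖x i‖ := le_of_lt (lt_of_le_of_lt hε'2 (hx i).1)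
      calc (‖x i‖)⁻¹ ≤ (ρ⁻¹)⁻¹ :=
            inv_anti₀ (inv_pos.mpr hρ0) h2
        _ = ρ := inv_inv ρ
    have hx0 : ∀ i, x i ≠ 0 := by
      intro i h
      have := hx2 i
      rw [h] at this
      simp at this
    have hvabs : 0 < ‖vand x‖ := norm_pos_iff.mpr hv
    -- the uniform constant
    refine Summable.of_nonneg_of_le (fun l => norm_nonneg _) (fun l => ?_)
      ((SG.mul_left (C * N * (N.factorial : ℝ) * ((k.factorial : ℝ) * (2 / s) ^ k) *
        Real.exp (s / 2 * N) / ‖vand x‖)))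
    -- notation
    set Mn : ℕ := Finset.univ.sup fun j => (l.1 j).natAbs with hMndef
    have hMl : ∀ j, (l.1 j).natAbs ≤ Mn := fun j =>
      Finset.le_sup (f := fun j => (l.1 j).natAbs) (Finset.mem_univ j)
    -- determinant bound
    have hdet := abs_det_le N x ρ hρ1.le hx1 hx3 hx0
      (fun j => l.1 j + (N : ℤ) - 1 - ((j : ℕ) : ℤ)) (Mn + N)
      (fun j => by
        have h1 := hMl j
        have h2 := j.isLt
        show (l.1 j + (N : ℤ) - 1 - ((j : ℕ) : ℤ)).natAbs ≤ Mn + N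
        omega)
    have hschur : ‖schur l.1 x‖
        ≤ (N.factorial : ℝ) * ρ ^ (N * (Mn + N)) / ‖vand x‖ := by
      unfold schur
      rw [norm_div]
      exact (div_le_div_iff_of_pos_right hvabs).mpr hdet
    -- weight bound
    have hwt : |m l| ≤ C * (N * ((Mn : ℝ)) ^ k) := by
      refine le_trans (hm l) (mul_le_mul_of_nonneg_left ?_ hC.le)
      calc ∑ i : Fin N, ((l.1 i).natAbs : ℝ) ^ k
          ≤ ∑ _i : Fin N, ((Mn : ℝ)) ^ k :=
            Finset.sum_le_sum fun i _ => pow_le_pow_left₀ (by positivity)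
              (by exact_mod_cast hMl i) k
        _ = N * ((Mn : ℝ)) ^ k := by
            rw [Finset.sum_const, Finset.card_univ, Fintype.card_fin, nsmul_eq_mul]
    have hpoly : ((Mn : ℝ)) ^ k
        ≤ (k.factorial : ℝ) * (2 / s) ^ k * Real.exp (s / 2 * (Mn : ℝ)) :=
      pow_le_exp_aux k hs (Nat.cast_nonneg _)
    have hρpow : ρ ^ (N * (Mn + N)) = Real.exp (s / 2 * (Mn : ℝ)) * Real.exp (s / 2 * N) := by
      rw [hρdef, ← Real.exp_nat_mul, ← Real.exp_add]
      congr 1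
      have hN' : (N : ℝ) ≠ 0 := Nat.cast_ne_zero.mpr hN.ne'
      push_cast
      field_simp
    have hsplit : Real.exp (s * (Mn : ℝ))
        = Real.exp (s / 2 * (Mn : ℝ)) * Real.exp (s / 2 * (Mn : ℝ)) := by
      rw [← Real.exp_add]
      congr 1
      ring
    -- final chain
    rw [norm_mul, Complex.norm_real, Real.norm_eq_abs, abs_mul,
      abs_of_nonneg (hc l)]
    calc |m l| * c l * ‖schur l.1 x‖
        ≤ (C * (N * ((Mn : ℝ)) ^ k)) * c l *
            ((N.factorial : ℝ) * ρ ^ (N * (Mn + N)) / ‖vand x‖) := by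
          apply mul_le_mul (mul_le_mul_of_nonneg_right hwt (hc l)) hschur
            (norm_nonneg _)
            (mul_nonneg (mul_nonneg hC.le (by positivity)) (hc l))
      _ = (C * (N : ℝ) * (N.factorial : ℝ) * Real.exp (s / 2 * N) / ‖vand x‖ *
            c l * Real.exp (s / 2 * (Mn : ℝ))) * ((Mn : ℝ)) ^ k := by
          rw [hρpow]
          ring
      _ ≤ (C * (N : ℝ) * (N.factorial : ℝ) * Real.exp (s / 2 * N) / ‖vand x‖ *
            c l * Real.exp (s / 2 * (Mn : ℝ))) *
            ((k.factorial : ℝ) * (2 / s) ^ k * Real.exp (s / 2 * (Mn : ℝ))) := by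
          apply mul_le_mul_of_nonneg_left hpoly
          apply mul_nonneg (mul_nonneg _ (hc l)) (Real.exp_pos _).le
          apply div_nonneg _ hvabs.le
          positivity
      _ = C * N * (N.factorial : ℝ) * ((k.factorial : ℝ) * (2 / s) ^ k) *
            Real.exp (s / 2 * N) / ‖vand x‖ *
            (c l * Real.exp (s * (Mn : ℝ))) := by
          rw [hsplit]
          ring
end

section
/- Let q > 0, and consider the inscribed-ellipse domain D = {(y,η) ∈ ℝ² : ( (y−η)²/q + (y+η−1)² )(1+q) ≤ 1 } with 0 < η ≤ 1. For any (y, η), the quadratic equation z²(q − yq) + z(ηq + η + q − y(1+q)) + η(1+q) = 0 has at most one root z in the open upper half-plane ℍ; it has exactly one root in ℍ if and only if (y, η) lies in the interior of D, and the resulting map from the interior of D to ℍ is a bijection (indeed a diffeomorphism). -/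
/-- The quadratic from the Aztec diamond complex structure:
`z²(q - yq) + z(ηq + η + q - y(1+q)) + η(1+q)`. -/
noncomputable def aztecQuad (q y η : ℝ) (z : ℂ) : ℂ :=
  z ^ 2 * ((q : ℂ) - (y : ℂ) * q) +
    z * ((η : ℂ) * q + η + q - (y : ℂ) * (1 + q)) + (η : ℂ) * (1 + q)

/-- The open inscribed-ellipse domain of the Aztec diamond. -/
def aztecEllipse (q : ℝ) : Set (ℝ × ℝ) :=
  {p : ℝ × ℝ | ((p.1 - p.2) ^ 2 / q + (p.1 + p.2 - 1) ^ 2) * (1 + q) < 1}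

namespace AztecAux

noncomputable def aA (q y : ℝ) : ℝ := q - y*q
noncomputable def bB (q y η : ℝ) : ℝ := η*q + η + q - y*(1+q)
noncomputable def cC (q η : ℝ) : ℝ := η*(1+q)
noncomputable def disc (q y η : ℝ) : ℝ := bB q y η ^2 - 4 * aA q y * cC q η

lemma quad_eq (q y η : ℝ) (z : ℂ) :
    aztecQuad q y η z = (aA q y : ℂ)*z^2 + (bB q y η : ℂ)*z + (cC q η : ℂ) := by
  simp only [aztecQuad, aA, bB, cC]; push_cast; ring

lemma disc_eq (q y η : ℝ) : disc q y η = (1+q)*(y-η)^2 + q*(1+q)*(y+η-1)^2 - q := by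
  simp only [disc, aA, bB, cC]; ring

lemma mem_ellipse_iff {q : ℝ} (hq : 0 < q) {y η : ℝ} :
    (y, η) ∈ aztecEllipse q ↔ disc q y η < 0 := by
  have key : ((y-η)^2/q + (y+η-1)^2)*(1+q) - 1 = disc q y η / q := by
    rw [disc_eq]; field_simp
  rw [aztecEllipse, Set.mem_setOf_eq, ← sub_neg, key, div_lt_iff₀ hq, zero_mul]

lemma mem_ellipse_iff' {q : ℝ} (hq : 0 < q) {p : ℝ × ℝ} :
    p ∈ aztecEllipse q ↔ disc q p.1 p.2 < 0 := by
  rw [← Prod.mk.eta (p := p)]; exact mem_ellipse_iff hq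

lemma eta_pos {q y η : ℝ} (hq : 0 < q) (hd : disc q y η < 0) : 0 < η := by
  rw [disc_eq] at hd
  by_contra h
  push_neg at h
  nlinarith [sq_nonneg ((y-η) + q*(y+η-1)),
    mul_nonneg (mul_nonneg hq.le (neg_nonneg.mpr h)) (by linarith : (0:ℝ) ≤ 2 - 2*η)]

lemma eta_lt_one {q y η : ℝ} (hq : 0 < q) (hd : disc q y η < 0) : η < 1 := by
  rw [disc_eq] at hd
  by_contra h
  push_neg at h
  nlinarith [sq_nonneg ((y-η) + q*(y+η-1)),
    mul_nonneg (mul_nonneg hq.le (by linarith : (0:ℝ) ≤ 2*η - 2)) (by linarith : (0:ℝ) ≤ 2*η)]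

lemma aA_pos {q y η : ℝ} (hq : 0 < q) (hd : disc q y η < 0) : 0 < aA q y := by
  have hy : y < 1 := by
    rw [disc_eq] at hd
    by_contra h
    push_neg at h
    nlinarith [sq_nonneg ((y-η) - q*(y+η-1)),
      mul_nonneg (mul_nonneg hq.le (by linarith : (0:ℝ) ≤ 2*y - 2)) (by linarith : (0:ℝ) ≤ 2*y)]
  simp only [aA]; nlinarith

lemma coeff_contra {q y η : ℝ} (hq : 0 < q) (ha : aA q y = 0) (hb : bB q y η = 0)
    (hc : cC q η = 0) : False := by
  simp only [aA, bB, cC] at ha hb hc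
  have hy : y = 0 := by linear_combination hc + ha - hb
  rw [hy] at ha
  simp at ha
  linarith

lemma real_parts {q y η : ℝ} {z : ℂ} (he : aztecQuad q y η z = 0) :
    aA q y * (z.re^2 - z.im^2) + bB q y η * z.re + cC q η = 0 ∧
    z.im * (2 * aA q y * z.re + bB q y η) = 0 := by
  rw [quad_eq, Complex.ext_iff] at he
  obtain ⟨h1, h2⟩ := he
  simp only [Complex.add_re, Complex.add_im, Complex.mul_re, Complex.mul_im,
    Complex.ofReal_re, Complex.ofReal_im, Complex.zero_re, Complex.zero_im, pow_two,
    Complex.mul_re, Complex.mul_im] at h1 h2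
  constructor
  · linear_combination h1
  · linear_combination h2

lemma nonreal_decomp {q y η : ℝ} (hq : 0 < q) {z : ℂ} (hz : 0 < z.im)
    (he : aztecQuad q y η z = 0) :
    aA q y ≠ 0 ∧ 2 * aA q y * z.re + bB q y η = 0 ∧
      disc q y η = -(4 * (aA q y)^2 * z.im^2) := by
  obtain ⟨h1, h2⟩ := real_parts he
  have h3 : 2 * aA q y * z.re + bB q y η = 0 :=
    (mul_eq_zero.mp h2).resolve_left hz.ne'
  have ha : aA q y ≠ 0 := by
    intro h0
    have hb : bB q y η = 0 := by linear_combination h3 - 2*z.re*h0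
    have hc : cC q η = 0 := by
      linear_combination h1 - (z.re^2 - z.im^2)*h0 - z.re*hb
    exact coeff_contra hq h0 hb hc
  refine ⟨ha, h3, ?_⟩
  simp only [disc]
  linear_combination (bB q y η + 2*aA q y*z.re)*h3 - 4*aA q y*h1

lemma disc_neg_of_root {q y η : ℝ} (hq : 0 < q) {z : ℂ} (hz : 0 < z.im)
    (he : aztecQuad q y η z = 0) : disc q y η < 0 := by
  obtain ⟨ha, -, hd⟩ := nonreal_decomp hq hz he
  rw [hd]
  have h4 : 0 < (aA q y)^2 := pow_pos (abs_pos.mpr ha) 2 |>.trans_eq (by rw [sq_abs])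
  nlinarith [mul_pos h4 (mul_pos hz hz)]

lemma uniq {q y η : ℝ} (hq : 0 < q) {z₁ z₂ : ℂ} (h1 : 0 < z₁.im) (h2 : 0 < z₂.im)
    (e1 : aztecQuad q y η z₁ = 0) (e2 : aztecQuad q y η z₂ = 0) : z₁ = z₂ := by
  by_contra hne
  rw [quad_eq] at e1 e2
  have key : (aA q y : ℂ) * (z₁ + z₂) + (bB q y η : ℂ) = 0 := by
    have hz : z₁ - z₂ ≠ 0 := sub_ne_zero.mpr hne
    have hfac : (z₁ - z₂) * ((aA q y : ℂ) * (z₁ + z₂) + (bB q y η : ℂ)) = 0 := by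
      linear_combination e1 - e2
    exact (mul_eq_zero.mp hfac).resolve_left hz
  have him : aA q y * (z₁.im + z₂.im) = 0 := by
    have := congrArg Complex.im key
    simpa [Complex.add_im, Complex.mul_im] using this
  have ha : aA q y = 0 := (mul_eq_zero.mp him).resolve_right (by linarith)
  rw [ha] at e1
  have e1' : (bB q y η : ℂ) * z₁ + (cC q η : ℂ) = 0 := by
    push_cast at e1 ⊢; linear_combination e1
  have hb : bB q y η = 0 := by
    have := congrArg Complex.im e1'
    simp only [Complex.add_im, Complex.mul_im, Complex.ofReal_re, Complex.ofReal_im,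
      Complex.zero_im] at this
    have h' : bB q y η * z₁.im = 0 := by linarith
    exact (mul_eq_zero.mp h').resolve_right h1.ne'
  have hc : cC q η = 0 := by
    have := congrArg Complex.re e1'
    simp only [Complex.add_re, Complex.mul_re, Complex.ofReal_re, Complex.ofReal_im,
      Complex.zero_re] at this
    linear_combination this - z₁.re*hb
  exact coeff_contra hq ha hb hc

/-! ### The root map `Zmap` -/

noncomputable def Zmap (q : ℝ) (p : ℝ × ℝ) : ℂ :=
  ((-bB q p.1 p.2 / (2*aA q p.1) : ℝ) : ℂ) +
    ((Real.sqrt (-disc q p.1 p.2) / (2*aA q p.1) : ℝ) : ℂ) * Complex.I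

lemma Zmap_im (q : ℝ) (p : ℝ × ℝ) :
    (Zmap q p).im = Real.sqrt (-disc q p.1 p.2) / (2*aA q p.1) := by
  simp only [Zmap, Complex.add_im, Complex.mul_im, Complex.ofReal_re, Complex.ofReal_im,
    Complex.I_re, Complex.I_im]
  ring

lemma Zmap_im_pos {q : ℝ} {p : ℝ × ℝ} (ha : 0 < aA q p.1) (hd : disc q p.1 p.2 < 0) :
    0 < (Zmap q p).im := by
  rw [Zmap_im]
  exact div_pos (Real.sqrt_pos.mpr (by linarith)) (by linarith)

lemma Zmap_root {q : ℝ} {p : ℝ × ℝ} (ha : 0 < aA q p.1) (hd : disc q p.1 p.2 < 0) :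
    aztecQuad q p.1 p.2 (Zmap q p) = 0 := by
  rw [quad_eq, Zmap]
  have hs : (Real.sqrt (-disc q p.1 p.2) : ℝ) ^ 2 = -(disc q p.1 p.2) :=
    Real.sq_sqrt (by linarith)
  have hsC : ((Real.sqrt (-disc q p.1 p.2) : ℝ) : ℂ) ^ 2
      = -((bB q p.1 p.2 : ℂ)^2 - 4 * (aA q p.1 : ℂ) * (cC q p.2 : ℂ)) := by
    rw [← Complex.ofReal_pow, hs]; simp only [disc]; push_cast; ring
  have haC : (aA q p.1 : ℂ) ≠ 0 := by exact_mod_cast ha.ne'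
  have hI : (Complex.I)^2 = -1 := Complex.I_sq
  push_cast
  field_simp
  ring_nf
  linear_combination (Complex.I^2) * hsC +
    ((4*(aA q p.1:ℂ)*(cC q p.2:ℂ) - (bB q p.1 p.2:ℂ)^2)) * hI

/-! ### Cramer's rule and the inverse map `Wmap` -/

lemma cramer_solve (A B C : ℂ) (hd : ((starRingEnd ℂ) A * B).im ≠ 0) :
    ((((starRingEnd ℂ) C * B).im / ((starRingEnd ℂ) A * B).im : ℝ) : ℂ) * A +
      ((((starRingEnd ℂ) A * C).im / ((starRingEnd ℂ) A * B).im : ℝ) : ℂ) * B = C := by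
  have key : ((((starRingEnd ℂ) C * B).im : ℝ) : ℂ) * A +
      ((((starRingEnd ℂ) A * C).im : ℝ) : ℂ) * B
        = ((((starRingEnd ℂ) A * B).im : ℝ) : ℂ) * C := by
    apply Complex.ext <;>
      simp only [Complex.add_re, Complex.add_im, Complex.mul_re, Complex.mul_im,
        Complex.ofReal_re, Complex.ofReal_im, Complex.conj_re, Complex.conj_im] <;> ring
  have hdC : ((((starRingEnd ℂ) A * B).im : ℝ) : ℂ) ≠ 0 := by exact_mod_cast hd
  rw [Complex.ofReal_div, Complex.ofReal_div, div_mul_eq_mul_div, div_mul_eq_mul_div,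
    ← add_div, div_eq_iff hdC]
  linear_combination key

lemma cramer_uniq {A B : ℂ} (hd : ((starRingEnd ℂ) A * B).im ≠ 0) {r t : ℝ}
    (h : (r : ℂ) * A + (t : ℂ) * B = 0) : r = 0 ∧ t = 0 := by
  have h1 := congrArg Complex.re h
  have h2 := congrArg Complex.im h
  simp only [Complex.add_re, Complex.add_im, Complex.mul_re, Complex.mul_im,
    Complex.ofReal_re, Complex.ofReal_im, Complex.zero_re, Complex.zero_im] at h1 h2
  have hd' : ((starRingEnd ℂ) A * B).im = A.re * B.im - A.im * B.re := by
    simp [Complex.mul_im]; ring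
  rw [hd'] at hd
  constructor
  · have : r * (A.re * B.im - A.im * B.re) = 0 := by linear_combination B.im*h1 - B.re*h2
    exact (mul_eq_zero.mp this).resolve_right hd
  · have : t * (A.re * B.im - A.im * B.re) = 0 := by linear_combination A.re*h2 - A.im*h1
    exact (mul_eq_zero.mp this).resolve_right hd

noncomputable def Af (q : ℝ) (z : ℂ) : ℂ := z * ((q:ℂ)*z + (1+q))
noncomputable def Bf (q : ℝ) (z : ℂ) : ℂ := -((1:ℂ)+q)*(z+1)
noncomputable def Cf (q : ℝ) (z : ℂ) : ℂ := (q:ℂ)*z*(z+1)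

noncomputable def detW (q : ℝ) (z : ℂ) : ℝ := ((starRingEnd ℂ) (Af q z) * Bf q z).im

noncomputable def Wmap (q : ℝ) (z : ℂ) : ℝ × ℝ :=
  (((starRingEnd ℂ) (Cf q z) * Bf q z).im / detW q z,
   ((starRingEnd ℂ) (Af q z) * (Cf q z)).im / detW q z)

lemma detW_eq (q : ℝ) (z : ℂ) :
    detW q z = (1+q) * z.im * (q*((z.re+1)^2 + z.im^2) + 1) := by
  simp only [detW, Af, Bf, Complex.mul_im, Complex.mul_re, Complex.add_re, Complex.add_im,
    Complex.conj_re, Complex.conj_im, Complex.ofReal_re, Complex.ofReal_im, Complex.one_re,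
    Complex.one_im, Complex.neg_re, Complex.neg_im]
  ring

lemma detW_pos {q : ℝ} (hq : 0 < q) {z : ℂ} (hz : 0 < z.im) : 0 < detW q z := by
  rw [detW_eq]
  have h0 : 0 < q*((z.re+1)^2 + z.im^2) + 1 := by positivity
  have h1 : (0:ℝ) < 1 + q := by linarith
  positivity

lemma quad_eq_lin (q y η : ℝ) (z : ℂ) :
    aztecQuad q y η z = Cf q z - ((y:ℂ) * Af q z + (η:ℂ) * Bf q z) := by
  simp only [aztecQuad, Af, Bf, Cf]; ring

lemma Wmap_lin {q : ℝ} (hq : 0 < q) {z : ℂ} (hz : 0 < z.im) :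
    ((Wmap q z).1 : ℂ) * Af q z + ((Wmap q z).2 : ℂ) * Bf q z = Cf q z := by
  exact cramer_solve (Af q z) (Bf q z) (Cf q z) (detW_pos hq hz).ne'

lemma Wmap_root {q : ℝ} (hq : 0 < q) {z : ℂ} (hz : 0 < z.im) :
    aztecQuad q (Wmap q z).1 (Wmap q z).2 z = 0 := by
  rw [quad_eq_lin, sub_eq_zero]
  exact (Wmap_lin hq hz).symm

lemma Wmap_mem {q : ℝ} (hq : 0 < q) {z : ℂ} (hz : 0 < z.im) :
    Wmap q z ∈ aztecEllipse q :=
  (mem_ellipse_iff' hq).mpr (disc_neg_of_root hq hz (Wmap_root hq hz))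

/-! ### Smoothness -/

lemma contDiff_aA (q : ℝ) : ContDiff ℝ (⊤ : ℕ∞) (fun p : ℝ × ℝ => aA q p.1) := by
  unfold aA; fun_prop

lemma contDiff_bB (q : ℝ) : ContDiff ℝ (⊤ : ℕ∞) (fun p : ℝ × ℝ => bB q p.1 p.2) := by
  unfold bB; fun_prop

lemma contDiff_disc (q : ℝ) : ContDiff ℝ (⊤ : ℕ∞) (fun p : ℝ × ℝ => disc q p.1 p.2) := by
  unfold disc aA bB cC; fun_prop

lemma Zmap_smooth {q : ℝ} {s : Set (ℝ × ℝ)} (ha : ∀ p ∈ s, aA q p.1 ≠ 0)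
    (hd : ∀ p ∈ s, disc q p.1 p.2 < 0) : ContDiffOn ℝ (⊤ : ℕ∞) (Zmap q) s := by
  have hden : ContDiffOn ℝ (⊤ : ℕ∞) (fun p : ℝ × ℝ => 2*aA q p.1) s :=
    (contDiff_const.mul (contDiff_aA q)).contDiffOn
  have hden' : ∀ p ∈ s, 2*aA q p.1 ≠ 0 := fun p hp => by
    have := ha p hp; intro h; apply this; linarith
  have hf : ContDiffOn ℝ (⊤ : ℕ∞) (fun p : ℝ × ℝ => -bB q p.1 p.2 / (2*aA q p.1)) s :=
    ((contDiff_bB q).neg.contDiffOn).div hden hden'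
  have hg : ContDiffOn ℝ (⊤ : ℕ∞)
      (fun p : ℝ × ℝ => Real.sqrt (-disc q p.1 p.2) / (2*aA q p.1)) s := by
    refine ContDiffOn.div ?_ hden hden'
    exact (ContDiffOn.sqrt ((contDiff_disc q).neg.contDiffOn)
      (fun p hp => by have := hd p hp; intro h; rw [neg_eq_zero] at h; linarith))
  exact ((Complex.ofRealCLM.contDiff.comp_contDiffOn hf).add
    ((Complex.ofRealCLM.contDiff.comp_contDiffOn hg).mul contDiffOn_const))

lemma contDiff_Af (q : ℝ) : ContDiff ℝ (⊤ : ℕ∞) (Af q) := by unfold Af; fun_prop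
lemma contDiff_Bf (q : ℝ) : ContDiff ℝ (⊤ : ℕ∞) (Bf q) := by unfold Bf; fun_prop
lemma contDiff_Cf (q : ℝ) : ContDiff ℝ (⊤ : ℕ∞) (Cf q) := by unfold Cf; fun_prop

lemma contDiff_num (f g : ℂ → ℂ) (hf : ContDiff ℝ (⊤ : ℕ∞) f) (hg : ContDiff ℝ (⊤ : ℕ∞) g) :
    ContDiff ℝ (⊤ : ℕ∞) (fun z => ((starRingEnd ℂ) (f z) * g z).im) :=
  Complex.imCLM.contDiff.comp ((Complex.conjCLE.contDiff.comp hf).mul hg)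

lemma Wmap_smooth {q : ℝ} {s : Set ℂ} (hd : ∀ z ∈ s, detW q z ≠ 0) :
    ContDiffOn ℝ (⊤ : ℕ∞) (Wmap q) s := by
  have hdet : ContDiffOn ℝ (⊤ : ℕ∞) (detW q) s :=
    (contDiff_num _ _ (contDiff_Af q) (contDiff_Bf q)).contDiffOn
  refine ContDiffOn.prodMk ?_ ?_
  · exact ((contDiff_num _ _ (contDiff_Cf q) (contDiff_Bf q)).contDiffOn).div hdet hd
  · exact ((contDiff_num _ _ (contDiff_Af q) (contDiff_Cf q)).contDiffOn).div hdet hd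

/-! ### Inverse properties -/

lemma Wmap_Zmap {q : ℝ} (hq : 0 < q) {p : ℝ × ℝ} (hp : p ∈ aztecEllipse q) :
    Wmap q (Zmap q p) = p := by
  have hd : disc q p.1 p.2 < 0 := (mem_ellipse_iff' hq).mp hp
  have ha : 0 < aA q p.1 := aA_pos hq hd
  have hz : 0 < (Zmap q p).im := Zmap_im_pos ha hd
  set z := Zmap q p
  have hp_lin : (p.1 : ℂ) * Af q z + (p.2 : ℂ) * Bf q z = Cf q z := by
    have := Zmap_root ha hd
    rw [quad_eq_lin] at this
    have := sub_eq_zero.mp this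
    linear_combination -this
  have hw_lin := Wmap_lin hq hz
  have hdiff : (((Wmap q z).1 - p.1 : ℝ) : ℂ) * Af q z
      + (((Wmap q z).2 - p.2 : ℝ) : ℂ) * Bf q z = 0 := by
    push_cast
    linear_combination hw_lin - hp_lin
  obtain ⟨h1, h2⟩ := cramer_uniq (detW_pos hq hz).ne' hdiff
  exact Prod.ext (by linarith) (by linarith)

lemma Zmap_Wmap {q : ℝ} (hq : 0 < q) {z : ℂ} (hz : 0 < z.im) :
    Zmap q (Wmap q z) = z := by
  have hd : disc q (Wmap q z).1 (Wmap q z).2 < 0 :=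
    disc_neg_of_root hq hz (Wmap_root hq hz)
  have ha : 0 < aA q (Wmap q z).1 := aA_pos hq hd
  exact uniq hq (Zmap_im_pos ha hd) hz (Zmap_root ha hd) (Wmap_root hq hz)

end AztecAux

open AztecAux in
/-- Proposition 3.4 (complex structure for the Aztec diamond): the quadratic
has at most one root in the upper half-plane; it has a root there iff `(y,η)` lies in the
interior of the inscribed ellipse; and the resulting root map is a diffeomorphism from the
interior of the ellipse onto the upper half-plane. -/
theorem aztec_quadratic_root_structure (q : ℝ) (hq : 0 < q) :
    (∀ y η : ℝ, 0 < η → η ≤ 1 → ∀ z₁ z₂ : ℂ, 0 < z₁.im → 0 < z₂.im →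
      aztecQuad q y η z₁ = 0 → aztecQuad q y η z₂ = 0 → z₁ = z₂) ∧
    (∀ y η : ℝ, 0 < η → η ≤ 1 →
      ((∃ z : ℂ, 0 < z.im ∧ aztecQuad q y η z = 0) ↔ (y, η) ∈ aztecEllipse q)) ∧
    (∃ Z : ℝ × ℝ → ℂ,
      Set.BijOn Z (aztecEllipse q) {z : ℂ | 0 < z.im} ∧
      (∀ p ∈ aztecEllipse q, 0 < (Z p).im ∧ aztecQuad q p.1 p.2 (Z p) = 0) ∧
      ContDiffOn ℝ (⊤ : ℕ∞) Z (aztecEllipse q) ∧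
      ∃ W : ℂ → ℝ × ℝ, ContDiffOn ℝ (⊤ : ℕ∞) W {z : ℂ | 0 < z.im} ∧
        Set.InvOn W Z (aztecEllipse q) {z : ℂ | 0 < z.im}) := by
  have hroot : ∀ p ∈ aztecEllipse q, 0 < (Zmap q p).im ∧ aztecQuad q p.1 p.2 (Zmap q p) = 0 := by
    intro p hp
    have hd : disc q p.1 p.2 < 0 := (mem_ellipse_iff' hq).mp hp
    have ha : 0 < aA q p.1 := aA_pos hq hd
    exact ⟨Zmap_im_pos ha hd, Zmap_root ha hd⟩
  have hleft : Set.LeftInvOn (Wmap q) (Zmap q) (aztecEllipse q) := fun p hp => Wmap_Zmap hq hp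
  have hright : Set.LeftInvOn (Zmap q) (Wmap q) {z : ℂ | 0 < z.im} :=
    fun z hz => Zmap_Wmap hq hz
  have hmapsW : Set.MapsTo (Wmap q) {z : ℂ | 0 < z.im} (aztecEllipse q) :=
    fun z hz => Wmap_mem hq hz
  have hmapsZ : Set.MapsTo (Zmap q) (aztecEllipse q) {z : ℂ | 0 < z.im} :=
    fun p hp => (hroot p hp).1
  refine ⟨fun y η _ _ z₁ z₂ h1 h2 e1 e2 => uniq hq h1 h2 e1 e2, ?_, ?_⟩
  · intro y η hη _
    constructor
    · rintro ⟨z, hz, he⟩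
      exact (mem_ellipse_iff hq).mpr (disc_neg_of_root hq hz he)
    · intro hm
      have hd : disc q y η < 0 := (mem_ellipse_iff hq).mp hm
      have ha : 0 < aA q y := aA_pos hq hd
      exact ⟨Zmap q (y, η), Zmap_im_pos ha hd, Zmap_root ha hd⟩
  · refine ⟨Zmap q, ⟨hmapsZ, hleft.injOn, hright.surjOn hmapsW⟩, hroot, ?_, Wmap q, ?_, hleft, hright⟩
    · refine Zmap_smooth (fun p hp => ?_) (fun p hp => (mem_ellipse_iff' hq).mp hp)
      exact (aA_pos hq ((mem_ellipse_iff' hq).mp hp)).ne'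
    · exact Wmap_smooth (fun z hz => (detW_pos hq hz).ne')
end
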